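/- arXiv:1411.7199 — 2 statements merged into one kernel-verified Lean document; each statement's English description precedes it below -/
import Mathlib

section
/- For every complex number z with e^z ≠ 1 and e^z ≠ -1, the functions f(z) = 1/(f̂(z) + 1/2) and g(z) = 1/(ĝ(z) - 1/4), where f̂(z) = (e^z+1)/(e^z-1)^2 and ĝ(z) = (e^z+1)^2/(8(e^z-1)), satisfy the algebraic relation 4·f(z)^2 + 2·f(z)·g(z) + g(z)^2 - 8·f(z) = 0. -/
theorem stmt_1 (z : ℂ) (hz1 : Complex.exp z ≠ 1) (hz2 : Complex.exp z ≠ -1) :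
    let fhat := (Complex.exp z + 1) / (Complex.exp z - 1) ^ 2
    let ghat := (Complex.exp z + 1) ^ 2 / (8 * (Complex.exp z - 1))
    let f := 1 / (fhat + 1 / 2)
    let g := 1 / (ghat - 1 / 4)
    4 * f ^ 2 + 2 * f * g + g ^ 2 - 8 * f = 0 := by
  intro fhat ghat f g
  have hu1 : Complex.exp z - 1 ≠ 0 := sub_ne_zero.mpr hz1
  have hEf : fhat + 1 / 2 = (Complex.exp z ^ 2 + 3) / (2 * (Complex.exp z - 1) ^ 2) := by
    show (Complex.exp z + 1) / (Complex.exp z - 1) ^ 2 + 1 / 2 = _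
    field_simp
    ring
  have hEg : ghat - 1 / 4 = (Complex.exp z ^ 2 + 3) / (8 * (Complex.exp z - 1)) := by
    show (Complex.exp z + 1) ^ 2 / (8 * (Complex.exp z - 1)) - 1 / 4 = _
    field_simp
    ring
  have hfeq : f = 2 * (Complex.exp z - 1) ^ 2 / (Complex.exp z ^ 2 + 3) := by
    show 1 / (fhat + 1 / 2) = _
    rw [hEf, one_div_div]
  have hgeq : g = 8 * (Complex.exp z - 1) / (Complex.exp z ^ 2 + 3) := by
    show 1 / (ghat - 1 / 4) = _
    rw [hEg, one_div_div]
  rw [hfeq, hgeq]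
  by_cases h : Complex.exp z ^ 2 + 3 = 0
  · rw [h]
    simp
  · field_simp
    ring
end

section
/- Let f̂(z) = (e^z+1)/(e^z-1)^2 and ĝ(z) = (e^z+1)^2/(8(e^z-1)). There is no Möbius transformation L with ĝ = L ∘ f̂: i.e., there do not exist α, β, γ, δ ∈ ℂ with αδ - βγ ≠ 0 such that ĝ(z) = (α·f̂(z) + β)/(γ·f̂(z) + δ) for all z with e^z ≠ 1 and γ·f̂(z) + δ ≠ 0. -/
theorem stmt_17 :
    ¬ ∃ α β γ δ : ℂ, α * δ - β * γ ≠ 0 ∧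
      ∀ z : ℂ, Complex.exp z ≠ 1 →
        γ * ((Complex.exp z + 1) / (Complex.exp z - 1) ^ 2) + δ ≠ 0 →
        (Complex.exp z + 1) ^ 2 / (8 * (Complex.exp z - 1)) =
          (α * ((Complex.exp z + 1) / (Complex.exp z - 1) ^ 2) + β) /
          (γ * ((Complex.exp z + 1) / (Complex.exp z - 1) ^ 2) + δ) := by
  rintro ⟨α, β, γ, δ, hd, h⟩
  have h' : ∀ w : ℂ, w ≠ 0 → w ≠ 1 →
      γ * ((w + 1) / (w - 1) ^ 2) + δ ≠ 0 →
      (w + 1) ^ 2 / (8 * (w - 1)) =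
        (α * ((w + 1) / (w - 1) ^ 2) + β) / (γ * ((w + 1) / (w - 1) ^ 2) + δ) := by
    intro w hw0 hw1 hwd
    have := h (Complex.log w)
    rw [Complex.exp_log hw0] at this
    exact this hw1 hwd
  by_cases h1 : γ * 3 + δ = 0
  · by_cases h2 : γ * (3/8) + δ = 0
    · have hγ : γ = 0 := by
        have := sub_eq_zero.mpr (h1.trans h2.symm)
        field_simp at this
        linear_combination this / 21
      have hδ : δ = 0 := by rw [hγ] at h1; simpa using h1
      apply hd; rw [hγ, hδ]; ring
    · -- use pair w = 5 and w = -1/3, f̂ = 3/8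
      have e1 := h' 5 (by norm_num) (by norm_num)
      have e2 := h' (-1/3 : ℂ) (by norm_num) (by norm_num)
      have k1 : ((5:ℂ) + 1) / (5 - 1) ^ 2 = 3/8 := by norm_num
      have k2 : ((-1/3:ℂ) + 1) / (-1/3 - 1) ^ 2 = 3/8 := by norm_num
      rw [k1] at e1
      rw [k2] at e2
      have e1 := e1 h2
      have e2 := e2 h2
      have : ((5:ℂ) + 1) ^ 2 / (8 * (5 - 1)) = ((-1/3:ℂ) + 1) ^ 2 / (8 * (-1/3 - 1)) :=
        e1.trans e2.symm
      norm_num at this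
  · -- use pair w = 2 and w = 1/3, f̂ = 3
    have e1 := h' 2 (by norm_num) (by norm_num)
    have e2 := h' (1/3 : ℂ) (by norm_num) (by norm_num)
    have k1 : ((2:ℂ) + 1) / (2 - 1) ^ 2 = 3 := by norm_num
    have k2 : ((1/3:ℂ) + 1) / (1/3 - 1) ^ 2 = 3 := by norm_num
    rw [k1] at e1
    rw [k2] at e2
    have e1 := e1 h1
    have e2 := e2 h1
    have : ((2:ℂ) + 1) ^ 2 / (8 * (2 - 1)) = ((1/3:ℂ) + 1) ^ 2 / (8 * (1/3 - 1)) :=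
      e1.trans e2.symm
    norm_num at this
end
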